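/- arXiv:0803.3196 — 2 statements merged into one kernel-verified Lean document; each statement's English description precedes it below -/
import Mathlib

section
/- For every integer q ≥ 1, the q-th power I^q of the augmentation ideal of 𝔽₂[V] equals the 𝔽₂-linear span of the fundamental classes [H] of the q-dimensional linear subspaces H ⊆ V. -/
open AddMonoidAlgebra

/-- The canonical basis element `[v]` of the group algebra `𝔽₂[V]` of the additive group `V`. -/
noncomputable def ga {V : Type*} [AddCommMonoid V] (v : V) :
    AddMonoidAlgebra (ZMod 2) V :=
  AddMonoidAlgebra.single v 1

/-- The fundamental class `[H] = ∑_{v ∈ H} [v] ∈ 𝔽₂[V]` of a linear subspace `H ⊆ V`. -/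
noncomputable def fundClass {V : Type*} [AddCommGroup V] [Module (ZMod 2) V]
    (H : Submodule (ZMod 2) V) : AddMonoidAlgebra (ZMod 2) V :=
  ∑ᶠ v ∈ (H : Set V), ga v

/-- The augmentation map `μ : 𝔽₂[V] → 𝔽₂`, sending each `[v]` to `1`. -/
noncomputable def aug (V : Type*) [AddCommMonoid V] :
    AddMonoidAlgebra (ZMod 2) V →ₐ[ZMod 2] ZMod 2 :=
  AddMonoidAlgebra.lift (ZMod 2) (ZMod 2) V 1

/-- The augmentation ideal `I ⊆ 𝔽₂[V]`, i.e. the kernel of the augmentation map. -/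
noncomputable def augIdeal (V : Type*) [AddCommMonoid V] :
    Ideal (AddMonoidAlgebra (ZMod 2) V) :=
  RingHom.ker (aug V).toRingHom

/-! The augmentation ideal is spanned over `𝔽₂` by the elements `[v] + 1`, so for `q ≥ 1` its
`q`-th power is spanned by the products `∏ᵢ ([wᵢ] + 1)`. Expanding, such a product is
`∑_{x ∈ 𝔽₂^q} [∑ᵢ xᵢ wᵢ]`. If the `wᵢ` are linearly independent this is the fundamental class of
their span; otherwise a nonzero relation `g` makes `x ↦ x + g` a fixed-point-free involution
preserving the summands, so the sum vanishes in characteristic `2`. Conversely the fundamental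
class of a `q`-dimensional subspace is the product attached to any of its bases. -/

open Finset Submodule Pointwise

section AugmentationIdeal

variable {V : Type*} [AddCommMonoid V]

lemma ga_add (a b : V) : ga (a + b) = ga a * ga b := by
  simp [ga, single_mul_single]

lemma aug_ga (v : V) : aug V (ga v) = 1 := by
  rw [aug, ga, lift_single, one_smul]
  rfl

lemma prod_ga {ι : Type*} (s : Finset ι) (w : ι → V) :
    ∏ i ∈ s, ga (w i) = ga (∑ i ∈ s, w i) := by
  induction s using Finset.cons_induction with
  | empty => rfl
  | cons a s ha ih => rw [prod_cons, sum_cons, ih, ga_add]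

lemma add_aug_smul_one_mem_span (x : AddMonoidAlgebra (ZMod 2) V) :
    x + aug V x • 1 ∈ span (ZMod 2) (Set.range fun v => ga v + 1) := by
  induction x using AddMonoidAlgebra.induction_linear with
  | zero => simp
  | add x y hx hy =>
    rw [map_add, add_smul, add_add_add_comm]
    exact add_mem hx hy
  | single v c =>
    have : single v c + aug V (single v c) • 1 = c • (ga v + 1) := by
      simp [aug, ga, lift_single, smul_add]
    rw [this]
    exact smul_mem _ _ (subset_span ⟨v, rfl⟩)

lemma restrictScalars_augIdeal :
    (augIdeal V).restrictScalars (ZMod 2) = span (ZMod 2) (Set.range fun v => ga v + 1) := by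
  apply le_antisymm
  · intro x hx
    simpa [show aug V x = 0 from hx] using add_aug_smul_one_mem_span x
  · rw [span_le]
    rintro _ ⟨v, rfl⟩
    show aug V (ga v + 1) = 0
    rw [map_add, aug_ga, map_one]
    rfl

end AugmentationIdeal

lemma ga_add_one_eq_sum_smul {V : Type*} [AddCommMonoid V] [Module (ZMod 2) V] (v : V) :
    ga v + 1 = ∑ c : ZMod 2, ga (c • v) := by
  have : (univ : Finset (ZMod 2)) = {0, 1} := rfl
  rw [this, sum_pair zero_ne_one, zero_smul, one_smul, add_comm]
  rfl

section ProductFormula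

variable {V ι : Type*} [AddCommGroup V] [Module (ZMod 2) V] [Fintype ι] [DecidableEq ι]

lemma prod_ga_add_one (w : ι → V) :
    ∏ i, (ga (w i) + 1) = ∑ x : ι → ZMod 2, ga (Fintype.linearCombination (ZMod 2) w x) := by
  simp_rw [ga_add_one_eq_sum_smul, Fintype.prod_sum, prod_ga, Fintype.linearCombination_apply]

lemma prod_ga_add_one_of_linearIndependent {w : ι → V} (hw : LinearIndependent (ZMod 2) w) :
    ∏ i, (ga (w i) + 1) = fundClass (span (ZMod 2) (Set.range w)) := by
  rw [prod_ga_add_one, fundClass, ← Fintype.range_linearCombination, LinearMap.coe_range,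
    finsum_mem_range hw.fintypeLinearCombination_injective, finsum_eq_sum_of_fintype]

lemma prod_ga_add_one_of_not_linearIndependent {w : ι → V}
    (hw : ¬LinearIndependent (ZMod 2) w) : ∏ i, (ga (w i) + 1) = 0 := by
  obtain ⟨g, hg_sum, i, hgi⟩ := Fintype.not_linearIndependent_iff.mp hw
  have hg : Fintype.linearCombination (ZMod 2) w g = 0 := by
    rwa [Fintype.linearCombination_apply]
  rw [prod_ga_add_one]
  refine sum_ninvolution (· + g) (fun x => ?_) (fun x _ => ?_) (fun _ => mem_univ _)
    (fun x => ?_)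
  · rw [map_add, hg, add_zero]
    exact ZModModule.add_self _
  · simpa using fun h => hgi (by simp [h])
  · rw [add_assoc, ZModModule.add_self, add_zero]

end ProductFormula

lemma Submodule.exists_linearIndependent_span_eq {K V : Type*} [DivisionRing K] [AddCommGroup V]
    [Module K V] (H : Submodule K V) [Module.Finite K H] :
    ∃ w : Fin (Module.finrank K H) → V, LinearIndependent K w ∧ span K (Set.range w) = H := by
  let b := Module.finBasis K H
  refine ⟨fun i => b i, b.linearIndependent.map' H.subtype H.ker_subtype, ?_⟩
  rw [Set.range_comp', ← H.coe_subtype, span_image, b.span_eq, map_top, range_subtype]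

lemma Set.range_pow_eq_range_prod {α M : Type*} [CommMonoid M] (f : α → M) (n : ℕ) :
    Set.range f ^ n = Set.range fun w : Fin n → α => ∏ i, f (w i) := by
  ext x
  simp only [Set.mem_pow, List.prod_ofFn, Set.mem_range]
  constructor
  · rintro ⟨g, rfl⟩
    exact ⟨fun i => (g i).2.choose, by simp only [(g _).2.choose_spec]⟩
  · rintro ⟨w, rfl⟩
    exact ⟨fun i => ⟨f (w i), w i, rfl⟩, rfl⟩

theorem augIdeal_pow_eq_span_fundClass_general {V : Type*} [AddCommGroup V] [Module (ZMod 2) V]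
    (q : ℕ) (hq : 1 ≤ q) :
    Submodule.restrictScalars (ZMod 2) (augIdeal V ^ q) =
      Submodule.span (ZMod 2)
        {x : AddMonoidAlgebra (ZMod 2) V |
          ∃ H : Submodule (ZMod 2) V, Module.finrank (ZMod 2) H = q ∧ x = fundClass H} := by
  rw [restrictScalars_pow (by omega), restrictScalars_augIdeal, span_pow,
    Set.range_pow_eq_range_prod]
  apply le_antisymm
  · rw [span_le]
    rintro _ ⟨w, rfl⟩
    beta_reduce
    by_cases hw : LinearIndependent (ZMod 2) w
    · refine subset_span ⟨_, ?_, prod_ga_add_one_of_linearIndependent hw⟩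
      rw [finrank_span_eq_card hw, Fintype.card_fin]
    · rw [SetLike.mem_coe, prod_ga_add_one_of_not_linearIndependent hw]
      exact zero_mem _
  · rw [span_le]
    rintro _ ⟨H, rfl, rfl⟩
    have : Module.Finite (ZMod 2) H := Module.finite_of_finrank_pos hq
    obtain ⟨w, hw, hspan⟩ := H.exists_linearIndependent_span_eq
    exact subset_span ⟨w, (prod_ga_add_one_of_linearIndependent hw).trans (by rw [hspan])⟩

/-- for every `q ≥ 1`, the `q`-th power `I^q` of the augmentation ideal of
`𝔽₂[V]` equals the `𝔽₂`-linear span of the fundamental classes `[H]` of the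
`q`-dimensional linear subspaces `H ⊆ V`. -/
theorem augIdeal_pow_eq_span_fundClass {V : Type*} [AddCommGroup V] [Module (ZMod 2) V]
    [Module.Finite (ZMod 2) V] (q : ℕ) (hq : 1 ≤ q) :
    Submodule.restrictScalars (ZMod 2) (augIdeal V ^ q) =
      Submodule.span (ZMod 2)
        {x : AddMonoidAlgebra (ZMod 2) V |
          ∃ H : Submodule (ZMod 2) V, Module.finrank (ZMod 2) H = q ∧ x = fundClass H} :=
  augIdeal_pow_eq_span_fundClass_general q hq
end

section
/- Let H, H' ⊆ V be linear subspaces. If H ∩ H' = {0}, then [H]·[H'] = [H + H'] in 𝔽₂[V]; if H ∩ H' ≠ {0}, then [H]·[H'] = 0. -/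
open AddMonoidAlgebra

/-! In `𝔽₂[V]` we have `[H]·[a] = [H]` for `a ∈ H`. If `H ∩ H' = 0`, the map `(v, w) ↦ v + w`
is a bijection `H × H' → H + H'`, which turns the expanded product into `[H + H']`. Otherwise pick
`a ≠ 0` in `H ∩ H'`: the fixed-point-free involution `w ↦ w + a` of `H'` pairs the summands of
`[H]·[H'] = ∑_{w ∈ H'} [H]·[w]` into equal pairs, which cancel in characteristic `2`. -/

open Set

theorem finsum_mem_mul_finsum_mem {α β R : Type*} [NonUnitalNonAssocSemiring R] {s : Set α}
    {t : Set β} (hs : s.Finite) (ht : t.Finite) (f : α → R) (g : β → R) :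
    (∑ᶠ i ∈ s, f i) * (∑ᶠ j ∈ t, g j) = ∑ᶠ p ∈ s ×ˢ t, f p.1 * g p.2 := by
  rw [finsum_mem_eq_finite_toFinset_sum _ hs, finsum_mem_eq_finite_toFinset_sum _ ht,
    finsum_mem_eq_finite_toFinset_sum _ (hs.prod ht), ← Finite.toFinset_prod,
    Finset.sum_mul_sum, Finset.sum_product]

theorem Submodule.injOn_add_of_disjoint {R M : Type*} [Ring R] [AddCommGroup M] [Module R M]
    {p q : Submodule R M} (h : Disjoint p q) :
    InjOn (fun x : M × M => x.1 + x.2) ((p : Set M) ×ˢ (q : Set M)) := by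
  rintro ⟨v₁, w₁⟩ ⟨hv₁, hw₁⟩ ⟨v₂, w₂⟩ ⟨hv₂, hw₂⟩ (heq : v₁ + w₁ = v₂ + w₂)
  have hdiff : v₁ - v₂ = w₂ - w₁ := sub_eq_sub_iff_add_eq_add.mpr (by rw [heq, add_comm])
  obtain rfl : v₁ = v₂ := sub_eq_zero.mp <|
    disjoint_def.mp h _ (p.sub_mem hv₁ hv₂) (hdiff ▸ q.sub_mem hw₂ hw₁)
  rw [add_left_cancel heq]

theorem ga_mul_ga {V : Type*} [AddCommMonoid V] (v w : V) : ga v * ga w = ga (v + w) := by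
  simp [ga, single_mul_single]

section

variable {V : Type*} [AddCommGroup V] [Module (ZMod 2) V] [Finite V]

theorem fundClass_mul_ga {H : Submodule (ZMod 2) V} {a : V} (ha : a ∈ H) :
    fundClass H * ga a = fundClass H := by
  rw [fundClass, finsum_mem_mul' _ _ (toFinite _)]
  refine finsum_mem_eq_of_bijOn (· + a) ⟨fun v hv => H.add_mem hv ha, (add_left_injective a).injOn,
    fun v hv => ⟨v - a, H.sub_mem hv ha, sub_add_cancel v a⟩⟩ fun v _ => ga_mul_ga v a

theorem fundClass_mul_fundClass_of_disjoint {H H' : Submodule (ZMod 2) V} (h : Disjoint H H') :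
    fundClass H * fundClass H' = fundClass (H ⊔ H') :=
  calc fundClass H * fundClass H'
      = ∑ᶠ p ∈ (H : Set V) ×ˢ (H' : Set V), ga (p.1 + p.2) := by
        simp_rw [fundClass, finsum_mem_mul_finsum_mem (toFinite _) (toFinite _), ga_mul_ga]
    _ = fundClass (H ⊔ H') := by
        rw [← finsum_mem_image (Submodule.injOn_add_of_disjoint h), add_image_prod,
          ← Submodule.coe_sup, fundClass]

theorem mul_fundClass_eq_zero_of_mul_ga_eq_self {H : Submodule (ZMod 2) V}
    {x : AddMonoidAlgebra (ZMod 2) V} {a : V} (ha : a ∈ H) (ha0 : a ≠ 0) (hx : x * ga a = x) :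
    x * fundClass H = 0 := by
  rw [fundClass, mul_finsum_mem' _ _ (toFinite _), finsum_mem_eq_finite_toFinset_sum _ (toFinite _)]
  refine Finset.sum_involution (fun w _ => w + a) (fun w _ => ?_) (fun w _ _ => ?_)
    (fun w hw => ?_) (fun w _ => ?_)
  · rw [← ga_mul_ga, ← mul_assoc, mul_right_comm, hx, ZModModule.add_self]
  · simpa using ha0
  · simp_all [H.add_mem]
  · rw [add_assoc, ZModModule.add_self, add_zero]

end

/-- for subspaces `H, H' ⊆ V`, if `H ∩ H' = {0}` then
`[H]·[H'] = [H + H']`, and if `H ∩ H' ≠ {0}` then `[H]·[H'] = 0` in `𝔽₂[V]`. -/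
theorem fundClass_mul_fundClass {V : Type*} [AddCommGroup V] [Module (ZMod 2) V]
    [Module.Finite (ZMod 2) V] (H H' : Submodule (ZMod 2) V) :
    (H ⊓ H' = ⊥ → fundClass H * fundClass H' = fundClass (H ⊔ H')) ∧
    (H ⊓ H' ≠ ⊥ → fundClass H * fundClass H' = 0) := by
  have : Finite V := Module.finite_of_finite (ZMod 2)
  refine ⟨fun h => fundClass_mul_fundClass_of_disjoint (disjoint_iff.mpr h), fun h => ?_⟩
  obtain ⟨a, ⟨haH, haH'⟩, ha0⟩ := Submodule.exists_mem_ne_zero_of_ne_bot h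
  exact mul_fundClass_eq_zero_of_mul_ga_eq_self haH' ha0 (fundClass_mul_ga haH)
end
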